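/- arXiv:2303.16441 — 3 statements merged into one kernel-verified Lean document; each statement's English description precedes it below -/
import Mathlib

section
/- For every w ∈ ℝⁿ (not necessarily with coordinates in Γ), the tilted algebra R[M]^w is the union of the tilted algebras R[M]^P, where P ranges over all Γ-rational polytopes containing w; that is, R[M]^w = ⋃_{P ∋ w} R[M]^P. -/
open scoped BigOperators

/-- A real-valued nonarchimedean valuation on a field `K`, written additively with
values in `ℝ ∪ {∞}`. -/
structure NAVal (K : Type*) [Field K] where
  v : K → WithTop ℝ
  v_eq_top_iff : ∀ a : K, v a = ⊤ ↔ a = 0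
  v_mul : ∀ a b : K, v (a * b) = v a + v b
  v_add : ∀ a b : K, min (v a) (v b) ≤ v (a + b)

/-- The valuation is nontrivial. -/
def NAVal.IsNontrivial {K : Type*} [Field K] (ν : NAVal K) : Prop :=
  ∃ a : K, ν.v a ≠ 0 ∧ ν.v a ≠ ⊤

/-- The value group `Γ = val(K×) ⊆ ℝ`. -/
def NAVal.valueGroup {K : Type*} [Field K] (ν : NAVal K) : Set ℝ :=
  {γ : ℝ | ∃ a : K, a ≠ 0 ∧ ν.v a = (γ : WithTop ℝ)}

/-- The standard pairing `⟨u, x⟩` between `u ∈ ℤⁿ` and `x ∈ ℝⁿ`. -/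
def pairing {n : ℕ} (u : Fin n → ℤ) (x : Fin n → ℝ) : ℝ :=
  ∑ i, (u i : ℝ) * x i

/-- The tilted algebra `R[M]^S ⊆ K[M]`: Laurent polynomials `f = Σ a_u χ^u` with
`val(a_u) + ⟨u, x⟩ ≥ 0` for all `u ∈ M` and all `x ∈ S`. -/
def tilted {K : Type*} [Field K] (ν : NAVal K) {n : ℕ} (S : Set (Fin n → ℝ)) :
    Set (AddMonoidAlgebra K (Fin n → ℤ)) :=
  {f | ∀ u : Fin n → ℤ, ∀ x ∈ S, (0 : WithTop ℝ) ≤ ν.v (f.coeff u) + ((pairing u x : ℝ) : WithTop ℝ)}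

/-- `P ⊆ ℝⁿ` is a `Γ`-rational polyhedron: a finite intersection of halfspaces
`{x : ⟨u, x⟩ ≥ γ}` with `u ∈ ℤⁿ` and `γ ∈ Γ`. -/
def IsGammaPolyhedron {K : Type*} [Field K] (ν : NAVal K) {n : ℕ}
    (P : Set (Fin n → ℝ)) : Prop :=
  ∃ (m : ℕ) (u : Fin m → Fin n → ℤ) (γ : Fin m → ℝ),
    (∀ i, γ i ∈ ν.valueGroup) ∧ P = {x | ∀ i, γ i ≤ pairing (u i) x}

/-- A `Γ`-rational polytope is a bounded `Γ`-rational polyhedron. -/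
def IsGammaPolytope {K : Type*} [Field K] (ν : NAVal K) {n : ℕ}
    (P : Set (Fin n → ℝ)) : Prop :=
  IsGammaPolyhedron ν P ∧ Bornology.IsBounded P

/-- The ideal `𝔪 · R[M]^S` of the tilted algebra: finite sums `Σ cᵢ • fᵢ` with
`val(cᵢ) > 0` and `fᵢ ∈ R[M]^S`. -/
def mSmulTilted {K : Type*} [Field K] (ν : NAVal K) {n : ℕ} (S : Set (Fin n → ℝ)) :
    Set (AddMonoidAlgebra K (Fin n → ℤ)) :=
  {f | ∃ (m : ℕ) (c : Fin m → K) (g : Fin m → AddMonoidAlgebra K (Fin n → ℤ)),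
    (∀ i, (0 : WithTop ℝ) < ν.v (c i)) ∧ (∀ i, g i ∈ tilted ν S) ∧
    f = ∑ i, c i • g i}

/-! Given `f ∈ R[M]^w`, the points `x` with `f ∈ R[M]^x` form a `Γ`-rational polyhedron:
one halfspace `⟨u, x⟩ ≥ -val(a_u)` for each `u` in the support of `f`, and `-val(a_u) ∈ Γ`.
It contains `w` but may be unbounded; since `Γ` is unbounded below, intersecting it with a
`Γ`-rational cube around the origin that contains `w` gives the required polytope. -/

namespace NAVal

variable {K : Type*} [Field K] (ν : NAVal K)

lemma v_zero : ν.v 0 = ⊤ := (ν.v_eq_top_iff 0).mpr rfl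

lemma v_one : ν.v 1 = 0 := by
  have hmul := ν.v_mul 1 1
  rw [mul_one] at hmul
  have hne : ν.v 1 ≠ ⊤ := fun h => one_ne_zero ((ν.v_eq_top_iff 1).mp h)
  lift ν.v 1 to ℝ using hne with c
  have : c = c + c := by exact_mod_cast hmul
  exact_mod_cast (by linarith : c = 0)

lemma exists_v_eq_coe {a : K} (ha : a ≠ 0) : ∃ r : ℝ, ν.v a = r :=
  WithTop.ne_top_iff_exists.mp (fun h => ha ((ν.v_eq_top_iff a).mp h)) |>.imp fun _ h => h.symm

def valueAddSubgroup : AddSubgroup ℝ where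
  carrier := ν.valueGroup
  zero_mem' := ⟨1, one_ne_zero, ν.v_one⟩
  add_mem' := by
    rintro _ _ ⟨a, ha, hγ⟩ ⟨b, hb, hδ⟩
    exact ⟨a * b, mul_ne_zero ha hb, by rw [ν.v_mul, hγ, hδ]; rfl⟩
  neg_mem' := by
    rintro γ ⟨a, ha, hγ⟩
    refine ⟨a⁻¹, inv_ne_zero ha, ?_⟩
    have hmul := ν.v_mul a a⁻¹
    rw [mul_inv_cancel₀ ha, ν.v_one, hγ] at hmul
    obtain ⟨s, hs⟩ := ν.exists_v_eq_coe (inv_ne_zero ha)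
    rw [hs] at hmul ⊢
    have : (0 : ℝ) = γ + s := by exact_mod_cast hmul
    exact_mod_cast (by linarith : s = -γ)

lemma exists_mem_valueGroup_le (hnt : ν.IsNontrivial) (r : ℝ) :
    ∃ γ ∈ ν.valueGroup, γ ≤ r := by
  obtain ⟨a, h0, htop⟩ := hnt
  obtain ⟨c, hc⟩ := WithTop.ne_top_iff_exists.mp htop
  have hcΓ : c ∈ ν.valueAddSubgroup :=
    ⟨a, fun h => htop (h ▸ ν.v_zero), hc.symm⟩
  have hc0 : c ≠ 0 := by rintro rfl; exact h0 hc.symm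
  have habs : |c| ∈ ν.valueAddSubgroup := by
    rcases abs_choice c with h | h <;> rw [h]
    exacts [hcΓ, neg_mem hcΓ]
  obtain ⟨N, hN⟩ := exists_nat_gt (-r / |c|)
  refine ⟨-(N • |c|), neg_mem (nsmul_mem habs N), ?_⟩
  rw [div_lt_iff₀ (abs_pos.mpr hc0)] at hN
  rw [nsmul_eq_mul]
  linarith

end NAVal

section

variable {K : Type*} [Field K] (ν : NAVal K) {n : ℕ}

lemma pairing_single (i : Fin n) (k : ℤ) (x : Fin n → ℝ) :
    pairing (Pi.single i k) x = k * x i := by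
  simp [pairing, Pi.single_apply, ite_mul, Finset.sum_ite_eq']

lemma isGammaPolyhedron_of_fintype {ι : Type*} [Fintype ι] (u : ι → Fin n → ℤ)
    (γ : ι → ℝ) (hγ : ∀ i, γ i ∈ ν.valueGroup) :
    IsGammaPolyhedron ν {x | ∀ i, γ i ≤ pairing (u i) x} := by
  let e := (Fintype.equivFin ι).symm
  refine ⟨Fintype.card ι, u ∘ e, γ ∘ e, fun i => hγ (e i), ?_⟩
  ext x
  exact e.forall_congr_right.symm

lemma IsGammaPolyhedron.inter {P Q : Set (Fin n → ℝ)} (hP : IsGammaPolyhedron ν P)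
    (hQ : IsGammaPolyhedron ν Q) : IsGammaPolyhedron ν (P ∩ Q) := by
  obtain ⟨m, u, γ, hγ, rfl⟩ := hP
  obtain ⟨k, u', γ', hγ', rfl⟩ := hQ
  convert isGammaPolyhedron_of_fintype ν (Sum.elim u u') (Sum.elim γ γ')
    (Sum.forall.mpr ⟨hγ, hγ'⟩) using 1
  ext x
  simp only [Set.mem_inter_iff, Set.mem_ofPred_eq, Sum.forall, Sum.elim_inl, Sum.elim_inr]

lemma IsGammaPolyhedron.inter_isGammaPolytope {P Q : Set (Fin n → ℝ)}
    (hP : IsGammaPolyhedron ν P) (hQ : IsGammaPolytope ν Q) : IsGammaPolytope ν (P ∩ Q) :=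
  ⟨hP.inter ν hQ.1, hQ.2.subset Set.inter_subset_right⟩

lemma isGammaPolytope_closedBall {r : ℝ} (hr : 0 ≤ r) (hrΓ : -r ∈ ν.valueGroup) :
    IsGammaPolytope ν (Metric.closedBall (0 : Fin n → ℝ) r) := by
  refine ⟨?_, Metric.isBounded_closedBall⟩
  convert isGammaPolyhedron_of_fintype ν
    (Sum.elim (fun i => Pi.single i 1) (fun i => Pi.single i (-1))) (fun _ => -r)
    (fun _ => hrΓ) using 1
  ext x
  simp only [mem_closedBall_zero_iff, pi_norm_le_iff_of_nonneg hr, Real.norm_eq_abs, abs_le,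
    Set.mem_ofPred_eq, Sum.forall, Sum.elim_inl, Sum.elim_inr, pairing_single]
  push_cast
  grind

lemma mem_tilted_iff_subset (f : AddMonoidAlgebra K (Fin n → ℤ)) (S : Set (Fin n → ℝ)) :
    f ∈ tilted ν S ↔ S ⊆ {x | f ∈ tilted ν {x}} := by
  simp only [tilted, Set.subset_def, Set.mem_ofPred_eq, Set.mem_singleton_iff, forall_eq]
  exact ⟨fun h x hx u => h u x hx, fun h u x hx => h x hx u⟩

lemma isGammaPolyhedron_setOf_mem_tilted_singleton (f : AddMonoidAlgebra K (Fin n → ℤ)) :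
    IsGammaPolyhedron ν {x | f ∈ tilted ν {x}} := by
  have hval (u : f.coeff.support) : ∃ r : ℝ, ν.v (f.coeff u) = r :=
    ν.exists_v_eq_coe (Finsupp.mem_support_iff.mp u.2)
  choose r hr using hval
  convert isGammaPolyhedron_of_fintype ν (fun u : f.coeff.support => (u : Fin n → ℤ))
    (fun u => -r u)
    (fun u => ν.valueAddSubgroup.neg_mem ⟨_, Finsupp.mem_support_iff.mp u.2, hr u⟩) using 1
  ext x
  simp only [tilted, Set.mem_ofPred_eq, Set.mem_singleton_iff, forall_eq, neg_le_iff_add_nonneg']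
  constructor
  · intro hx u
    exact_mod_cast (hr u ▸ hx u)
  · intro hx u
    by_cases hu : u ∈ f.coeff.support
    · rw [hr ⟨u, hu⟩]
      exact_mod_cast hx ⟨u, hu⟩
    · rw [Finsupp.notMem_support_iff.mp hu, ν.v_zero, top_add]
      exact le_top

end

theorem tilted_point_eq_iUnion_tilted_polytope_general {K : Type*} [Field K]
    (ν : NAVal K) (hnt : ν.IsNontrivial) {n : ℕ} (w : Fin n → ℝ) :
    tilted ν ({w} : Set (Fin n → ℝ)) =
      ⋃ P ∈ {P : Set (Fin n → ℝ) | IsGammaPolytope ν P ∧ w ∈ P}, tilted ν P := by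
  ext f
  simp only [Set.mem_iUnion, Set.mem_ofPred_eq, exists_prop]
  constructor
  · intro hf
    obtain ⟨γ, hγ, hγw⟩ := ν.exists_mem_valueGroup_le hnt (-‖w‖)
    have hr : 0 ≤ -γ := by linarith [norm_nonneg w]
    refine ⟨{x | f ∈ tilted ν {x}} ∩ Metric.closedBall 0 (-γ), ⟨?_, hf, ?_⟩, ?_⟩
    · exact (isGammaPolyhedron_setOf_mem_tilted_singleton ν f).inter_isGammaPolytope ν
        (isGammaPolytope_closedBall ν hr (by rwa [neg_neg]))
    · rw [mem_closedBall_zero_iff]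
      linarith
    · exact (mem_tilted_iff_subset ν f _).mpr Set.inter_subset_left
  · rintro ⟨P, ⟨-, hwP⟩, hfP⟩
    exact (mem_tilted_iff_subset ν f P).mp hfP hwP

/-- for every `w ∈ ℝⁿ`, `R[M]^w = ⋃_{P ∋ w} R[M]^P`, the union over
all `Γ`-rational polytopes `P` containing `w`. -/
theorem tilted_point_eq_iUnion_tilted_polytope {K : Type*} [Field K] [IsAlgClosed K]
    (ν : NAVal K) (hnt : ν.IsNontrivial) {n : ℕ} (hn : 1 ≤ n) (w : Fin n → ℝ) :
    tilted ν ({w} : Set (Fin n → ℝ)) =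
      ⋃ P ∈ {P : Set (Fin n → ℝ) | IsGammaPolytope ν P ∧ w ∈ P}, tilted ν P :=
  tilted_point_eq_iUnion_tilted_polytope_general ν hnt w
end

section
/- For every w ∈ ℝⁿ, the ideal 𝔪·R[M]^w equals the set of all f = Σ_u a_u χ^u ∈ K[M] such that val(a_u) + ⟨u,w⟩ > 0 for every u in the support of f. -/
open scoped BigOperators

/-!
An element `c • g` of `𝔪 · R[M]^w` has coefficients `c · b_u` with `val(c) > 0` and
`val(b_u) + ⟨u, w⟩ ≥ 0`, and the ultrametric inequality carries the strict bound to finite sums.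
Conversely, if the finitely many numbers `val(a_u) + ⟨u, w⟩` are positive, so is their minimum
`ε`; since `K` is algebraically closed the value group is divisible, so there is `c` with
`0 < val(c) ≤ ε`, and then `f = c • (c⁻¹ • f)` with `c⁻¹ • f ∈ R[M]^w`.
-/

namespace NAVal

variable {K : Type*} [Field K] (ν : NAVal K)

lemma v_ne_top {a : K} (ha : a ≠ 0) : ν.v a ≠ ⊤ := fun h => ha ((ν.v_eq_top_iff a).1 h)

lemma v_add_v_inv {a : K} (ha : a ≠ 0) : ν.v a + ν.v a⁻¹ = 0 := by
  rw [← ν.v_mul, mul_inv_cancel₀ ha, ν.v_one]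

lemma v_pow (a : K) (m : ℕ) : ν.v (a ^ m) = m • ν.v a := by
  induction m with
  | zero => simp [ν.v_one]
  | succ m ih => rw [pow_succ, ν.v_mul, ih, succ_nsmul]

lemma pos_v_sum {ι : Type*} (s : Finset ι) (a : ι → K) (t : WithTop ℝ)
    (h : ∀ i ∈ s, 0 < ν.v (a i) + t) : 0 < ν.v (∑ i ∈ s, a i) + t := by
  induction s using Finset.cons_induction with
  | empty => simp [ν.v_zero]
  | cons x s _ ih =>
    rw [Finset.sum_cons]
    have hx := h x (Finset.mem_cons_self x s)
    have hs := ih fun i hi => h i (Finset.mem_cons_of_mem hi)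
    refine lt_of_lt_of_le ?_ (add_le_add_left (ν.v_add _ _) t)
    rcases min_choice (ν.v (a x)) (ν.v (∑ i ∈ s, a i)) with hmin | hmin <;> rw [hmin] <;>
      assumption

lemma exists_pos_v_ne_top (hnt : ν.IsNontrivial) : ∃ b : K, 0 < ν.v b ∧ ν.v b ≠ ⊤ := by
  obtain ⟨a, ha0, hatop⟩ := hnt
  have ha : a ≠ 0 := fun h => hatop (h ▸ ν.v_zero)
  have hinv := ν.v_add_v_inv ha
  lift ν.v a to ℝ using hatop with r hr
  lift ν.v a⁻¹ to ℝ using ν.v_ne_top (inv_ne_zero ha) with s hs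
  have hrs : r + s = 0 := by exact_mod_cast hinv
  have hr0 : r ≠ 0 := by exact_mod_cast ha0
  rcases hr0.lt_or_gt with hneg | hpos
  · exact ⟨a⁻¹, by rw [← hs]; exact_mod_cast (by linarith : 0 < s), hs ▸ WithTop.coe_ne_top⟩
  · exact ⟨a, by rw [← hr]; exact_mod_cast hpos, hr ▸ WithTop.coe_ne_top⟩

lemma exists_pos_v_le [IsAlgClosed K] (hnt : ν.IsNontrivial) {ε : WithTop ℝ} (hε : 0 < ε) :
    ∃ c : K, c ≠ 0 ∧ 0 < ν.v c ∧ ν.v c ≤ ε := by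
  obtain ⟨b, hbpos, hbtop⟩ := ν.exists_pos_v_ne_top hnt
  have hb : b ≠ 0 := fun h => hbtop (h ▸ ν.v_zero)
  induction ε using WithTop.recTopCoe with
  | top => exact ⟨b, hb, hbpos, le_top⟩
  | coe μ =>
    have hμ : 0 < μ := by exact_mod_cast hε
    lift ν.v b to ℝ using hbtop with δ hδ
    obtain ⟨m, hm⟩ := exists_nat_gt (δ / μ)
    have hδ0 : 0 < δ := by exact_mod_cast hbpos
    have hm0 : 0 < m := by exact_mod_cast (div_pos hδ0 hμ).trans hm
    obtain ⟨c, rfl⟩ := IsAlgClosed.exists_pow_nat_eq b hm0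
    have hc : c ≠ 0 := fun h => by simp [h, hm0.ne', ν.v_zero] at hδ
    have hpow := ν.v_pow c m
    lift ν.v c to ℝ using ν.v_ne_top hc with s hs
    rw [← hδ, ← WithTop.coe_nsmul, WithTop.coe_eq_coe, nsmul_eq_mul] at hpow
    have hm' : (0 : ℝ) < m := by exact_mod_cast hm0
    have hspos : 0 < s := by nlinarith
    have hsle : s ≤ μ := by
      rw [div_lt_iff₀ hμ, hpow] at hm
      nlinarith
    exact ⟨c, hc, by rw [← hs]; exact_mod_cast hspos, by rw [← hs]; exact_mod_cast hsle⟩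

end NAVal

section Tilted

variable {K : Type*} [Field K] (ν : NAVal K) {n : ℕ} {S : Set (Fin n → ℝ)}

lemma pos_of_mem_mSmulTilted {f : AddMonoidAlgebra K (Fin n → ℤ)} (hf : f ∈ mSmulTilted ν S)
    (u : Fin n → ℤ) {x : Fin n → ℝ} (hx : x ∈ S) :
    0 < ν.v (f.coeff u) + ((pairing u x : ℝ) : WithTop ℝ) := by
  obtain ⟨m, c, g, hc, hg, rfl⟩ := hf
  have hcoeff : (∑ i, c i • g i).coeff u = ∑ i, c i * (g i).coeff u := by
    simp [AddMonoidAlgebra.coeff_sum, AddMonoidAlgebra.coeff_smul]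
  rw [hcoeff]
  refine ν.pos_v_sum _ _ _ fun i _ => ?_
  rw [ν.v_mul, add_assoc]
  exact lt_of_lt_of_le (hc i) (le_add_of_nonneg_right (hg i u x hx))

lemma zero_mem_mSmulTilted : (0 : AddMonoidAlgebra K (Fin n → ℤ)) ∈ mSmulTilted ν S :=
  ⟨0, Fin.elim0, Fin.elim0, fun i => i.elim0, fun i => i.elim0, by simp⟩

lemma smul_mem_mSmulTilted {c : K} (hc : 0 < ν.v c) {g : AddMonoidAlgebra K (Fin n → ℤ)}
    (hg : g ∈ tilted ν S) : c • g ∈ mSmulTilted ν S :=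
  ⟨1, fun _ => c, fun _ => g, fun _ => hc, fun _ => hg, by simp⟩

lemma inv_smul_mem_tilted {c : K} (hc : c ≠ 0) {f : AddMonoidAlgebra K (Fin n → ℤ)}
    (hf : ∀ u ∈ f.coeff.support, ∀ x ∈ S,
      ν.v c ≤ ν.v (f.coeff u) + ((pairing u x : ℝ) : WithTop ℝ)) :
    c⁻¹ • f ∈ tilted ν S := by
  intro u x hx
  have hcoeff : (c⁻¹ • f).coeff u = c⁻¹ * f.coeff u := rfl
  by_cases hfu : f.coeff u = 0
  · simp [hfu, ν.v_zero]
  · have hsplit : ν.v (f.coeff u) = ν.v c + ν.v (c⁻¹ * f.coeff u) := by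
      rw [← ν.v_mul, mul_inv_cancel_left₀ hc]
    have h := hf u (Finsupp.mem_support_iff.2 hfu) x hx
    rw [hsplit, add_assoc, ← add_zero (ν.v c), add_assoc, zero_add,
      WithTop.add_le_add_iff_left (ν.v_ne_top hc)] at h
    rwa [hcoeff]

end Tilted

theorem mSmulTilted_point_eq_general {K : Type*} [Field K] [IsAlgClosed K]
    (ν : NAVal K) (hnt : ν.IsNontrivial) {n : ℕ} (w : Fin n → ℝ) :
    mSmulTilted ν ({w} : Set (Fin n → ℝ)) =
      {f : AddMonoidAlgebra K (Fin n → ℤ) | ∀ u ∈ f.coeff.support,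
        (0 : WithTop ℝ) < ν.v (f.coeff u) + ((pairing u w : ℝ) : WithTop ℝ)} := by
  ext f
  refine ⟨fun hf u _ => pos_of_mem_mSmulTilted ν hf u rfl, fun hf => ?_⟩
  rcases f.coeff.support.eq_empty_or_nonempty with hempty | hne
  · rw [show f = 0 from AddMonoidAlgebra.coeff_eq_zero.1 (Finsupp.support_eq_empty.1 hempty)]
    exact zero_mem_mSmulTilted ν
  obtain ⟨c, hc, hcpos, hcε⟩ := ν.exists_pos_v_le hnt ((Finset.lt_inf'_iff hne).2 hf)
  rw [← smul_inv_smul₀ hc f]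
  refine smul_mem_mSmulTilted ν hcpos (inv_smul_mem_tilted ν hc fun u hu x hx => ?_)
  rw [Set.mem_singleton_iff.1 hx]
  exact hcε.trans (Finset.inf'_le _ hu)

/-- for every `w ∈ ℝⁿ`, the ideal `𝔪·R[M]^w` equals the set of
`f = Σ a_u χ^u` with `val(a_u) + ⟨u, w⟩ > 0` for every `u` in the support of `f`. -/
theorem mSmulTilted_point_eq {K : Type*} [Field K] [IsAlgClosed K]
    (ν : NAVal K) (hnt : ν.IsNontrivial) {n : ℕ} (hn : 1 ≤ n) (w : Fin n → ℝ) :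
    mSmulTilted ν ({w} : Set (Fin n → ℝ)) =
      {f : AddMonoidAlgebra K (Fin n → ℤ) | ∀ u ∈ f.coeff.support,
        (0 : WithTop ℝ) < ν.v (f.coeff u) + ((pairing u w : ℝ) : WithTop ℝ)} :=
  mSmulTilted_point_eq_general ν hnt w
end

section
/- Let P ⊆ ℝⁿ be a nonempty Γ-rational polyhedron, let u ∈ ℤⁿ and a ∈ K× satisfy val(a) + ⟨u,v⟩ ≥ 0 for all v ∈ P, and let v' ∈ ℝⁿ satisfy ⟨u,v'⟩ > 0. Then the monomial a·χ^u lies in 𝔪·R[M]^{v'+P}, where v'+P = {v' + v : v ∈ P} is the translated polyhedron. (In particular, such a monomial vanishes modulo the maximal ideal 𝔪.) -/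
open scoped BigOperators

/-!
Pick `c ∈ K` with `0 < val(c) ≤ ⟨u, v'⟩`; such an element exists because `K` is algebraically
closed, so an `N`-th root of any element of positive valuation `r` has valuation `r / N`.
Then `a·χ^u = c · (c⁻¹a)·χ^u`, and `c⁻¹a·χ^u` lies in `R[M]^{v' + P}` since for `x ∈ P`,
`val(c⁻¹a) + ⟨u, v' + x⟩ = (⟨u, v'⟩ - val(c)) + (val(a) + ⟨u, x⟩) ≥ 0`.
-/

namespace NAVal

variable {K : Type*} [Field K] (ν : NAVal K)

lemma ne_zero_of_v_eq_coe {a : K} {r : ℝ} (hr : ν.v a = r) : a ≠ 0 := by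
  rintro rfl
  exact WithTop.coe_ne_top (hr.symm.trans ((ν.v_eq_top_iff 0).mpr rfl))

lemma v_inv {a : K} {r : ℝ} (hr : ν.v a = r) : ν.v a⁻¹ = ((-r : ℝ) : WithTop ℝ) := by
  have ha := ν.ne_zero_of_v_eq_coe hr
  obtain ⟨s, hs⟩ := ν.exists_v_eq_coe (inv_ne_zero ha)
  have h := ν.v_mul a a⁻¹
  rw [mul_inv_cancel₀ ha, ν.v_one, hr, hs] at h
  have h' : (0 : ℝ) = r + s := by exact_mod_cast h
  rw [hs, show s = -r by linarith]

lemma v_pow_s5 {a : K} {r : ℝ} (hr : ν.v a = r) (N : ℕ) : ν.v (a ^ N) = ((N * r : ℝ) : WithTop ℝ) := by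
  induction N with
  | zero => simpa using ν.v_one
  | succ k ih =>
    rw [pow_succ, ν.v_mul, ih, hr, ← WithTop.coe_add]
    congr 1
    push_cast
    ring

lemma exists_v_eq_pos (hnt : ν.IsNontrivial) : ∃ (b : K) (r : ℝ), ν.v b = r ∧ 0 < r := by
  obtain ⟨a, ha0, hatop⟩ := hnt
  obtain ⟨r, hr⟩ := WithTop.ne_top_iff_exists.mp hatop
  rcases lt_trichotomy r 0 with hneg | rfl | hpos
  · exact ⟨a⁻¹, -r, ν.v_inv hr.symm, neg_pos.mpr hneg⟩
  · exact absurd hr.symm ha0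
  · exact ⟨a, r, hr.symm, hpos⟩

lemma exists_v_eq_pos_le [IsAlgClosed K] (hnt : ν.IsNontrivial) {ε : ℝ} (hε : 0 < ε) :
    ∃ (c : K) (s : ℝ), ν.v c = s ∧ 0 < s ∧ s ≤ ε := by
  obtain ⟨b, r, hbr, hr⟩ := ν.exists_v_eq_pos hnt
  obtain ⟨N, hN⟩ := exists_nat_ge (r / ε)
  have hN0 : (0 : ℝ) < N := (div_pos hr hε).trans_le hN
  obtain ⟨c, hc⟩ := IsAlgClosed.exists_pow_nat_eq b (Nat.cast_pos.mp hN0)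
  have hc0 : c ≠ 0 := by
    rintro rfl
    exact ν.ne_zero_of_v_eq_coe hbr (hc ▸ zero_pow (Nat.cast_pos.mp hN0).ne')
  obtain ⟨s, hs⟩ := ν.exists_v_eq_coe hc0
  have hNs : N * s = r := by exact_mod_cast (ν.v_pow_s5 hs N).symm.trans (hc ▸ hbr)
  refine ⟨c, s, hs, pos_of_mul_pos_right (hNs ▸ hr) hN0.le, ?_⟩
  rw [div_le_iff₀ hε] at hN
  nlinarith

end NAVal

lemma pairing_add {n : ℕ} (u : Fin n → ℤ) (x y : Fin n → ℝ) :
    pairing u (x + y) = pairing u x + pairing u y := by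
  simp only [pairing, Pi.add_apply, mul_add, Finset.sum_add_distrib]

section Tilted

variable {K : Type*} [Field K] (ν : NAVal K) {n : ℕ} {S : Set (Fin n → ℝ)}

lemma single_mem_tilted {u : Fin n → ℤ} {a : K}
    (h : ∀ x ∈ S, (0 : WithTop ℝ) ≤ ν.v a + ((pairing u x : ℝ) : WithTop ℝ)) :
    AddMonoidAlgebra.single u a ∈ tilted ν S := by
  intro w x hx
  by_cases hw : u = w
  · subst hw
    simpa [AddMonoidAlgebra.coeff] using h x hx
  · have hcoeff : (AddMonoidAlgebra.single u a).coeff w = 0 := Finsupp.single_eq_of_ne' hw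
    rw [hcoeff, (ν.v_eq_top_iff 0).mpr rfl, top_add]
    exact le_top

end Tilted

theorem single_mem_mSmulTilted_translate_general {K : Type*} [Field K] [IsAlgClosed K]
    (ν : NAVal K) (hnt : ν.IsNontrivial) {n : ℕ}
    (P : Set (Fin n → ℝ))
    (u : Fin n → ℤ) (a : K) (ha : a ≠ 0)
    (hval : ∀ x ∈ P, (0 : WithTop ℝ) ≤ ν.v a + ((pairing u x : ℝ) : WithTop ℝ))
    (v' : Fin n → ℝ) (hv' : 0 < pairing u v') :
    (AddMonoidAlgebra.single u a) ∈ mSmulTilted ν ((fun x => v' + x) '' P) := by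
  obtain ⟨c, s, hcs, hs, hsle⟩ := ν.exists_v_eq_pos_le hnt hv'
  obtain ⟨α, hα⟩ := ν.exists_v_eq_coe ha
  have hc0 := ν.ne_zero_of_v_eq_coe hcs
  have hmem : AddMonoidAlgebra.single u (c⁻¹ * a) ∈ tilted ν ((fun x => v' + x) '' P) := by
    refine single_mem_tilted ν ?_
    rintro _ ⟨x, hx, rfl⟩
    have hx' : (0 : ℝ) ≤ α + pairing u x := by exact_mod_cast hα ▸ hval x hx
    rw [ν.v_mul, ν.v_inv hcs, hα, pairing_add]
    exact_mod_cast (by linarith : (0 : ℝ) ≤ -s + α + (pairing u v' + pairing u x))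
  have hsplit : AddMonoidAlgebra.single u a = c • AddMonoidAlgebra.single u (c⁻¹ * a) := by
    rw [AddMonoidAlgebra.smul_single', mul_inv_cancel_left₀ hc0]
  rw [hsplit]
  exact smul_mem_mSmulTilted ν (by rw [hcs]; exact_mod_cast hs) hmem

/-- if `P` is a nonempty `Γ`-rational polyhedron, `u ∈ ℤⁿ`, `a ∈ K×`
satisfy `val(a) + ⟨u, x⟩ ≥ 0` for all `x ∈ P`, and `v' ∈ ℝⁿ` satisfies `⟨u, v'⟩ > 0`,
then the monomial `a·χ^u` lies in `𝔪·R[M]^{v' + P}`. -/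
theorem single_mem_mSmulTilted_translate {K : Type*} [Field K] [IsAlgClosed K]
    (ν : NAVal K) (hnt : ν.IsNontrivial) {n : ℕ} (hn : 1 ≤ n)
    (P : Set (Fin n → ℝ)) (hpoly : IsGammaPolyhedron ν P) (hne : P.Nonempty)
    (u : Fin n → ℤ) (a : K) (ha : a ≠ 0)
    (hval : ∀ x ∈ P, (0 : WithTop ℝ) ≤ ν.v a + ((pairing u x : ℝ) : WithTop ℝ))
    (v' : Fin n → ℝ) (hv' : 0 < pairing u v') :
    (AddMonoidAlgebra.single u a) ∈ mSmulTilted ν ((fun x => v' + x) '' P) :=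
  single_mem_mSmulTilted_translate_general ν hnt P u a ha hval v' hv'
end
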